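/- Let Ω ⊆ ℝ be an unbounded open set with finitely many connected components. If Ω is spectral, i.e., there exists a positive Radon measure μ on ℝ such that (Ω, μ) is a spectral pair, then Ω has no gaps between its component intervals: the complement ℝ∖Ω is a finite set (in particular, it has Lebesgue measure zero). -/

import Mathlib

open MeasureTheory

/-- The exponential `e_{-λ}(x) = e^{-2πi λ x}` used in the Fourier transform on `Ω ⊆ ℝ`. -/
noncomputable def negExp1 (lam x : ℝ) : ℂ :=
  Complex.exp ((((-2) * Real.pi * (lam * x) : ℝ) : ℂ) * Complex.I)

/-- `(Ω, μ)` is a spectral pair in dimension one. -/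
def IsSpectralPair1 (Ω : Set ℝ) (μ : Measure ℝ) : Prop :=
  (∀ f : ℝ → ℂ, Integrable f (volume.restrict Ω) →
      MemLp f 2 (volume.restrict Ω) →
      MemLp (fun lam => ∫ x in Ω, f x * negExp1 lam x) 2 μ ∧
      eLpNorm (fun lam => ∫ x in Ω, f x * negExp1 lam x) 2 μ
        = eLpNorm f 2 (volume.restrict Ω)) ∧
  Dense {g : Lp ℂ 2 μ | ∃ f : ℝ → ℂ,
      Integrable f (volume.restrict Ω) ∧ MemLp f 2 (volume.restrict Ω) ∧
      (g : ℝ → ℂ) =ᵐ[μ] fun lam => ∫ x in Ω, f x * negExp1 lam x}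

/-!
Suppose `Ω` contains arbitrarily long intervals, as an unbounded `Ω` with finitely many
components does. A function `g ∈ L¹ ∩ L²(ℝ)` with bounded support can then be translated into `Ω`,
and translation only multiplies `𝓕 g` by a unimodular factor, so `‖𝓕 g‖_{L²(μ)} = ‖g‖₂`.
Let `h = 1_K` for a bounded `K ⊆ ℝ ∖ Ω`. Approximating `f ∈ L²(Ω)` by a compactly supported `G`
on `Ω`, the disjointness of supports gives `‖G - h‖₂ ≥ ‖h‖₂`, hence `‖𝓕 f - 𝓕 h‖_{L²(μ)} ≥ ‖h‖₂`.
Since the transforms `𝓕 f` are dense in `L²(μ)`, `|K| = 0`; so `ℝ ∖ Ω` is null and `Ω` is dense.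
A point of `ℝ ∖ Ω` then lies in the closure of one of the finitely many component intervals
without lying in it, so it is one of their endpoints.
-/

open Set FourierTransform Bornology Function

lemma integral_mul_negExp1 (g : ℝ → ℂ) (lam : ℝ) :
    ∫ x, g x * negExp1 lam x = 𝓕 g lam := by
  rw [Real.fourier_real_eq_integral_exp_smul]
  congr 1 with x
  rw [smul_eq_mul, mul_comm, negExp1]
  congr 3
  push_cast
  ring

lemma setIntegral_mul_negExp1 {Ω : Set ℝ} (hΩ : MeasurableSet Ω) (f : ℝ → ℂ) (lam : ℝ) :
    ∫ x in Ω, f x * negExp1 lam x = 𝓕 (Ω.indicator f) lam := by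
  rw [← integral_mul_negExp1, ← integral_indicator hΩ]
  simp only [indicator_mul_left]

lemma continuous_fourier_of_integrable {g : ℝ → ℂ} (hg : Integrable g) : Continuous (𝓕 g) :=
  VectorFourier.fourierIntegral_continuous Real.continuous_fourierChar continuous_inner hg

lemma fourier_sub_of_integrable {f g : ℝ → ℂ} (hf : Integrable f) (hg : Integrable g) :
    𝓕 (f - g) = 𝓕 f - 𝓕 g := by
  ext w
  simp only [Real.fourier_eq, Pi.sub_apply, smul_sub]
  exact integral_sub ((Real.fourierIntegral_convergent_iff w).2 hf)
    ((Real.fourierIntegral_convergent_iff w).2 hg)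

lemma norm_fourier_comp_add_right (g : ℝ → ℂ) (c w : ℝ) :
    ‖𝓕 (fun x => g (x + c)) w‖ = ‖𝓕 g w‖ := by
  change ‖VectorFourier.fourierIntegral 𝐞 volume (innerₗ ℝ) (g ∘ fun x => x + c) w‖ = _
  rw [VectorFourier.fourierIntegral_comp_add_right, Circle.norm_smul]
  rfl

lemma sUnion_image_connectedComponentIn {α : Type*} [TopologicalSpace α] (F : Set α) :
    ⋃₀ (connectedComponentIn F '' F) = F :=
  subset_antisymm (sUnion_subset <| forall_mem_image.2 fun _ _ => connectedComponentIn_subset F _)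
    fun _ hx => mem_sUnion_of_mem (mem_connectedComponentIn hx) (mem_image_of_mem _ hx)

lemma exists_Icc_subset_of_not_isBounded {Ω : Set ℝ} (hunb : ¬ IsBounded Ω)
    (hcomp : (connectedComponentIn Ω '' Ω).Finite) (L : ℝ) : ∃ a, Icc a (a + L) ⊆ Ω := by
  obtain ⟨x, hx, hC⟩ : ∃ x ∈ Ω, ¬ IsBounded (connectedComponentIn Ω x) := by
    by_contra! h
    rw [← sUnion_image_connectedComponentIn Ω, isBounded_sUnion hcomp] at hunb
    exact hunb (forall_mem_image.2 h)
  have hxC := mem_connectedComponentIn hx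
  have hC_ord := (isPreconnected_connectedComponentIn (F := Ω) (x := x)).ordConnected
  have hCΩ : connectedComponentIn Ω x ⊆ Ω := connectedComponentIn_subset _ _
  rw [isBounded_iff_bddBelow_bddAbove, not_and_or, not_bddBelow_iff, not_bddAbove_iff] at hC
  rcases hC with h | h
  · obtain ⟨y, hy, hyx⟩ := h (x - L)
    exact ⟨x - L, ((Icc_subset_Icc hyx.le (by linarith)).trans (hC_ord.out hy hxC)).trans hCΩ⟩
  · obtain ⟨y, hy, hyx⟩ := h (x + L)
    exact ⟨x, ((Icc_subset_Icc le_rfl hyx.le).trans (hC_ord.out hxC hy)).trans hCΩ⟩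

lemma Set.OrdConnected.eq_csInf_or_eq_csSup_of_mem_closure {α : Type*}
    [ConditionallyCompleteLinearOrder α] [TopologicalSpace α] [OrderTopology α]
    {C : Set α} (hC : C.OrdConnected) {y : α} (hy : y ∈ closure C) (hyC : y ∉ C) :
    y = sInf C ∨ y = sSup C := by
  have hne : C.Nonempty := closure_nonempty_iff.1 ⟨y, hy⟩
  by_cases hlow : y ∈ lowerBounds C
  · exact Or.inl ((isGLB_of_mem_closure hlow hy).csInf_eq hne).symm
  by_cases hup : y ∈ upperBounds C
  · exact Or.inr ((isLUB_of_mem_closure hup hy).csSup_eq hne).symm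
  simp only [mem_lowerBounds, mem_upperBounds, not_forall, not_le] at hlow hup
  obtain ⟨a, ha, hay⟩ := hlow
  obtain ⟨b, hb, hyb⟩ := hup
  exact absurd (hC.out ha hb ⟨hay.le, hyb.le⟩) hyC

lemma finite_compl_of_volume_compl_eq_zero {Ω : Set ℝ}
    (hcomp : (connectedComponentIn Ω '' Ω).Finite) (hnull : volume Ωᶜ = 0) : Ωᶜ.Finite := by
  refine (hcomp.biUnion fun C _ => toFinite ({sInf C, sSup C} : Set ℝ)).subset fun y hy => ?_
  have hdense : Dense Ω := by
    simpa using (volume : Measure ℝ).dense_of_ae (measure_eq_zero_iff_ae_notMem.1 hnull)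
  have hy_cl : y ∈ ⋃ C ∈ connectedComponentIn Ω '' Ω, closure C := by
    rw [← hcomp.closure_sUnion, sUnion_image_connectedComponentIn, hdense.closure_eq]
    trivial
  obtain ⟨_, ⟨x, hx, rfl⟩, hyC⟩ := mem_iUnion₂.1 hy_cl
  refine mem_biUnion (mem_image_of_mem _ hx) ?_
  exact isPreconnected_connectedComponentIn.ordConnected.eq_csInf_or_eq_csSup_of_mem_closure hyC
    fun h => hy (connectedComponentIn_subset _ _ h)

namespace IsSpectralPair1

variable {Ω : Set ℝ} {μ : Measure ℝ}

lemma fourier_isometry_of_support_subset (hsp : IsSpectralPair1 Ω μ) (hΩ : MeasurableSet Ω)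
    {g : ℝ → ℂ} (hg : Integrable g) (hg2 : MemLp g 2) (hgΩ : support g ⊆ Ω) :
    MemLp (𝓕 g) 2 μ ∧ eLpNorm (𝓕 g) 2 μ = eLpNorm g 2 volume := by
  have hft : (fun lam => ∫ x in Ω, g x * negExp1 lam x) = 𝓕 g := by
    ext lam
    rw [setIntegral_mul_negExp1 hΩ, indicator_eq_self.2 hgΩ]
  rw [← hft, ← eLpNorm_restrict_eq_of_support_subset hgΩ]
  exact hsp.1 g hg.restrict (hg2.restrict Ω)

lemma fourier_isometry_of_isBounded_support (hsp : IsSpectralPair1 Ω μ) (hΩ : MeasurableSet Ω)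
    (hlong : ∀ L : ℝ, ∃ a, Icc a (a + L) ⊆ Ω) {g : ℝ → ℂ}
    (hg : Integrable g) (hg2 : MemLp g 2) (hgb : IsBounded (support g)) :
    MemLp (𝓕 g) 2 μ ∧ eLpNorm (𝓕 g) 2 μ = eLpNorm g 2 volume := by
  set s := sInf (support g)
  set t := sSup (support g)
  obtain ⟨c, hc⟩ := hlong (t - s)
  have hshift := measurePreserving_add_right volume (s - c)
  set g' : ℝ → ℂ := fun x => g (x + (s - c))
  have hg'Ω : support g' ⊆ Ω := fun x hx => hc <| by
    have := hgb.subset_Icc_sInf_sSup hx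
    constructor <;> linarith [this.1, this.2]
  have hnorm (w : ℝ) : ‖𝓕 g' w‖ = ‖𝓕 g w‖ := norm_fourier_comp_add_right g (s - c) w
  obtain ⟨hmem, heq⟩ := hsp.fourier_isometry_of_support_subset hΩ (hg.comp_add_right (s - c))
    (hg2.comp_measurePreserving hshift) hg'Ω
  refine ⟨hmem.of_le (continuous_fourier_of_integrable hg).aestronglyMeasurable
    (ae_of_all _ fun w => (hnorm w).ge), ?_⟩
  rw [← eLpNorm_congr_norm_ae (ae_of_all _ hnorm), heq]
  exact eLpNorm_comp_measurePreserving hg2.1 hshift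

lemma eLpNorm_le_eLpNorm_fourier_sub (hsp : IsSpectralPair1 Ω μ) (hΩ : MeasurableSet Ω)
    (hlong : ∀ L : ℝ, ∃ a, Icc a (a + L) ⊆ Ω) {f h : ℝ → ℂ}
    (hf : Integrable f) (hf2 : MemLp f 2) (hfΩ : support f ⊆ Ω)
    (hh : Integrable h) (hh2 : MemLp h 2) (hhb : IsBounded (support h)) (hhΩ : support h ⊆ Ωᶜ) :
    eLpNorm h 2 volume ≤ eLpNorm (𝓕 f - 𝓕 h) 2 μ := by
  refine ENNReal.le_of_forall_pos_le_add fun ε hε _ => ?_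
  obtain ⟨g, hg_supp, hfg, hg_cont, hg2⟩ :=
    hf2.exists_hasCompactSupport_eLpNorm_sub_le (by norm_num) (ENNReal.coe_ne_zero.2 hε.ne')
  set G := Ω.indicator g
  have hG : Integrable G :=
    (hg_cont.integrable_of_hasCompactSupport hg_supp).indicator hΩ
  have hG2 : MemLp G 2 := hg2.indicator hΩ
  have hf_sub_G : f - G = Ω.indicator (f - g) := by
    rw [indicator_sub', indicator_eq_self.2 hfΩ]
  have close : eLpNorm (𝓕 G - 𝓕 f) 2 μ ≤ ε := by
    rw [eLpNorm_sub_comm, ← fourier_sub_of_integrable hf hG,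
      (hsp.fourier_isometry_of_support_subset hΩ (hf.sub hG) (hf2.sub hG2)
        (hf_sub_G ▸ support_indicator_subset)).2, hf_sub_G]
    exact (eLpNorm_indicator_le _).trans hfg
  have far : eLpNorm h 2 volume ≤ eLpNorm (𝓕 G - 𝓕 h) 2 μ := by
    have hGb : IsBounded (support G) := hg_supp.isCompact.isBounded.subset <| by
      rw [support_indicator]; exact inter_subset_right.trans (subset_tsupport g)
    have hb : IsBounded (support (G - h)) := (hGb.union hhb).subset (support_sub G h)
    rw [← fourier_sub_of_integrable hG hh,
      (hsp.fourier_isometry_of_isBounded_support hΩ hlong (hG.sub hh) (hG2.sub hh2) hb).2]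
    refine eLpNorm_mono fun x => ?_
    by_cases hx : x ∈ Ω
    · rw [notMem_support.1 fun hx' => hhΩ hx' hx, norm_zero]
      exact norm_nonneg _
    · rw [Pi.sub_apply, show G x = 0 from indicator_of_notMem hx g, zero_sub, norm_neg]
  calc eLpNorm h 2 volume ≤ eLpNorm (𝓕 G - 𝓕 h) 2 μ := far
    _ = eLpNorm (𝓕 G - 𝓕 f + (𝓕 f - 𝓕 h)) 2 μ := by rw [sub_add_sub_cancel]
    _ ≤ eLpNorm (𝓕 G - 𝓕 f) 2 μ + eLpNorm (𝓕 f - 𝓕 h) 2 μ :=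
      eLpNorm_add_le
        ((continuous_fourier_of_integrable hG).sub
          (continuous_fourier_of_integrable hf)).aestronglyMeasurable
        ((continuous_fourier_of_integrable hf).sub
          (continuous_fourier_of_integrable hh)).aestronglyMeasurable one_le_two
    _ ≤ eLpNorm (𝓕 f - 𝓕 h) 2 μ + ε := by rw [add_comm]; gcongr

lemma volume_compl_eq_zero (hsp : IsSpectralPair1 Ω μ) (hΩ : MeasurableSet Ω)
    (hlong : ∀ L : ℝ, ∃ a, Icc a (a + L) ⊆ Ω) : volume Ωᶜ = 0 := by
  suffices h : ∀ K ⊆ Ωᶜ, MeasurableSet K → IsBounded K → volume K = 0 by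
    rw [← inter_univ Ωᶜ, ← Metric.iUnion_ball_nat 0, inter_iUnion]
    exact measure_iUnion_null fun n => h _ inter_subset_left
      (hΩ.compl.inter measurableSet_ball) (Metric.isBounded_ball.subset inter_subset_right)
  intro K hKΩ hK hKb
  set h : ℝ → ℂ := K.indicator fun _ => 1
  have hKfin : volume K ≠ ⊤ := hKb.measure_lt_top.ne
  have hh : Integrable h := (integrable_indicator_iff hK).2 (integrableOn_const hKfin)
  have hh2 : MemLp h 2 := memLp_indicator_const 2 hK 1 (Or.inr hKfin)
  have hhb : IsBounded (support h) := hKb.subset support_indicator_subset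
  set H := ((hsp.fourier_isometry_of_isBounded_support hΩ hlong hh hh2 hhb).1).toLp
  have hlow : ∀ u ∈ {u : Lp ℂ 2 μ | ∃ f : ℝ → ℂ, Integrable f (volume.restrict Ω) ∧
      MemLp f 2 (volume.restrict Ω) ∧ (u : ℝ → ℂ) =ᵐ[μ] fun lam => ∫ x in Ω, f x * negExp1 lam x},
      eLpNorm h 2 volume ≤ edist u H := by
    rintro u ⟨f, hf, hf2, hu⟩
    rw [Lp.edist_def, eLpNorm_congr_ae (hu.sub (MemLp.coeFn_toLp _))]
    simp only [setIntegral_mul_negExp1 hΩ]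
    exact hsp.eLpNorm_le_eLpNorm_fourier_sub hΩ hlong ((integrable_indicator_iff hΩ).2 hf)
      ((memLp_indicator_iff_restrict hΩ).2 hf2) support_indicator_subset hh hh2 hhb
      (hKΩ.trans' support_indicator_subset)
  have hH : eLpNorm h 2 volume ≤ edist H H :=
    (isClosed_le continuous_const (continuous_id.edist continuous_const)).closure_subset_iff.2
      hlow (hsp.2.closure_eq ▸ mem_univ H)
  rw [edist_self, nonpos_iff_eq_zero, eLpNorm_indicator_const hK (by norm_num) (by norm_num)] at hH
  simpa [hKfin] using hH

end IsSpectralPair1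

/-- An unbounded open set `Ω ⊆ ℝ` with finitely many connected components
which is spectral has no gaps: its complement is a finite set. -/
theorem statement9 (Ω : Set ℝ) (hΩ : IsOpen Ω)
    (hunb : ¬ Bornology.IsBounded Ω)
    (hcomp : {C : Set ℝ | ∃ x ∈ Ω, connectedComponentIn Ω x = C}.Finite)
    (hspec : ∃ μ : Measure ℝ, μ.Regular ∧ IsSpectralPair1 Ω μ) :
    Ωᶜ.Finite := by
  obtain ⟨μ, -, hsp⟩ := hspec
  have hlong := exists_Icc_subset_of_not_isBounded hunb hcomp
  exact finite_compl_of_volume_compl_eq_zero hcomp (hsp.volume_compl_eq_zero hΩ.measurableSet hlong)
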